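/- Let G be a group acting acylindrically by isometries on a hyperbolic geodesic metric space with unbounded orbits. Then G contains a loxodromic element. (Equivalently: an acylindrical action on a hyperbolic space cannot be parabolic.) -/

import Mathlib

open Bornology

/-- A geodesic segment from `x` to `y`, parametrized by arc length on `[0, dist x y]`. -/
def IsGeodesicSeg {S : Type*} [MetricSpace S] (f : ℝ → S) (x y : S) : Prop :=
  f 0 = x ∧ f (dist x y) = y ∧
    ∀ s ∈ Set.Icc (0:ℝ) (dist x y), ∀ t ∈ Set.Icc (0:ℝ) (dist x y),
      dist (f s) (f t) = |s - t|

/-- A metric space is geodesic if any two points are joined by a geodesic segment. -/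
def GeodesicMetricSpace (S : Type*) [MetricSpace S] : Prop :=
  ∀ x y : S, ∃ f : ℝ → S, IsGeodesicSeg f x y

/-- Rips condition: every side of a geodesic triangle lies in the union of the
δ-neighbourhoods of the other two sides. -/
def RipsHyperbolic (S : Type*) [MetricSpace S] (δ : ℝ) : Prop :=
  ∀ (x y z : S) (f g h : ℝ → S), IsGeodesicSeg f x y → IsGeodesicSeg g y z →
    IsGeodesicSeg h x z →
    ∀ s ∈ Set.Icc (0:ℝ) (dist x y),
      (∃ t ∈ Set.Icc (0:ℝ) (dist y z), dist (f s) (g t) ≤ δ) ∨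
      (∃ t ∈ Set.Icc (0:ℝ) (dist x z), dist (f s) (h t) ≤ δ)

/-- The Gromov product `(x,y)_t`. -/
noncomputable def gromov {S : Type*} [MetricSpace S] (x y t : S) : ℝ :=
  (dist x t + dist y t - dist x y) / 2

/-- Acylindricity of an isometric action of `G` on `S`. -/
def AcylindricalAction (G S : Type*) [Group G] [MetricSpace S] [MulAction G S] : Prop :=
  ∀ ε : ℝ, 0 < ε → ∃ R : ℝ, ∃ N : ℕ, 0 < R ∧
    ∀ x y : S, dist x y ≥ R →
      {g : G | dist x (g • x) ≤ ε ∧ dist y (g • y) ≤ ε}.Finite ∧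
      {g : G | dist x (g • x) ≤ ε ∧ dist y (g • y) ≤ ε}.ncard ≤ N

/-- `g` is loxodromic: some orbit map `n ↦ gⁿ • s` is a quasi-isometric embedding of ℤ. -/
def Loxodromic {G S : Type*} [Group G] [MetricSpace S] [MulAction G S] (g : G) : Prop :=
  ∃ s : S, ∃ lam C : ℝ, 1 ≤ lam ∧ 0 ≤ C ∧ ∀ m n : ℤ,
    lam⁻¹ * |(m : ℝ) - (n : ℝ)| - C ≤ dist ((g ^ m) • s) ((g ^ n) • s) ∧
    dist ((g ^ m) • s) ((g ^ n) • s) ≤ lam * |(m : ℝ) - (n : ℝ)| + C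

/-!
Suppose no element of `G` is loxodromic. By the classical criterion, every `g` then backtracks at
every point: `d(s, g s) < 2 (g s, g⁻¹ s)_s + 6δ + 1`. Played off against the four-point condition,
this shows that any two orbit points `a s`, `b s` fellow-travel from `s` for about half the shorter
of `d(s, a s)`, `d(s, b s)`, and hence that `d(s, g v s) ≈ d(s, v s)` whenever `v` moves `s` much
further than `g`. Consequently every `g` of bounded displacement moves the middle part of a long
geodesic `[s, v s]` by at most `34δ + 3`. As the orbit is unbounded, these middle parts are
arbitrarily long, so they contain two points at distance `R` that are both almost fixed by any
given `N + 1` elements of the (infinite) group, contradicting acylindricity.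
-/

section Geodesic

variable {S : Type*} [MetricSpace S]

theorem gromov_comm (x y t : S) : gromov x y t = gromov y x t := by
  rw [gromov, gromov, dist_comm x y, add_comm (dist x t)]

theorem gromov_nonneg (x y t : S) : 0 ≤ gromov x y t := by
  rw [gromov]
  linarith [dist_triangle_right x y t]

theorem gromov_le_dist_left (x y t : S) : gromov x y t ≤ dist x t := by
  rw [gromov]
  linarith [dist_triangle_left y t x]

theorem gromov_le_dist_right (x y t : S) : gromov x y t ≤ dist y t :=
  gromov_comm x y t ▸ gromov_le_dist_left y x t

namespace IsGeodesicSeg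

variable {f : ℝ → S} {x y : S} {t : ℝ}

theorem dist_left (hf : IsGeodesicSeg f x y) (ht : t ∈ Set.Icc 0 (dist x y)) :
    dist x (f t) = t := by
  have h := hf.2.2 0 ⟨le_rfl, dist_nonneg⟩ t ht
  rw [hf.1, zero_sub, abs_neg, abs_of_nonneg ht.1] at h
  exact h

theorem dist_right (hf : IsGeodesicSeg f x y) (ht : t ∈ Set.Icc 0 (dist x y)) :
    dist (f t) y = dist x y - t := by
  have h := hf.2.2 t ht (dist x y) ⟨dist_nonneg, le_rfl⟩
  rw [hf.2.1, abs_sub_comm, abs_of_nonneg (sub_nonneg.2 ht.2)] at h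
  exact h

theorem reverse (hf : IsGeodesicSeg f x y) : IsGeodesicSeg (fun u ↦ f (dist x y - u)) y x := by
  rw [IsGeodesicSeg, dist_comm y x]
  refine ⟨by simpa using hf.2.1, by simpa using hf.1, fun s hs t ht ↦ ?_⟩
  rw [hf.2.2 _ ⟨sub_nonneg.2 hs.2, by linarith [hs.1]⟩ _ ⟨sub_nonneg.2 ht.2, by linarith [ht.1]⟩,
    ← abs_neg]
  ring_nf

theorem gromov_le_dist (hf : IsGeodesicSeg f x y) (ht : t ∈ Set.Icc 0 (dist x y)) (w : S) :
    gromov x y w ≤ dist w (f t) := by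
  have hx := dist_triangle x (f t) w
  have hy := dist_triangle y (f t) w
  rw [hf.dist_left ht] at hx
  rw [dist_comm y (f t), hf.dist_right ht] at hy
  rw [gromov, dist_comm w]
  linarith

theorem dist_right_le_of_dist_le {p w z : S} {δ u : ℝ} (hf : IsGeodesicSeg f p w)
    (hu : u ∈ Set.Icc 0 (dist p w)) (hz : dist z (f u) ≤ δ) :
    dist z w ≤ dist p w - dist p z + 2 * δ := by
  have h₁ := dist_triangle z (f u) w
  have h₂ := dist_triangle p (f u) z
  rw [hf.dist_right hu] at h₁
  rw [hf.dist_left hu, dist_comm (f u)] at h₂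
  linarith

end IsGeodesicSeg

end Geodesic

namespace RipsHyperbolic

variable {S : Type*} [MetricSpace S] {δ : ℝ}

theorem nonneg (hgeo : GeodesicMetricSpace S) (hhyp : RipsHyperbolic S δ) (x : S) : 0 ≤ δ := by
  obtain ⟨f, hf⟩ := hgeo x x
  have h0 : (0 : ℝ) ∈ Set.Icc 0 (dist x x) := by simp
  rcases hhyp x x x f f f hf hf hf 0 h0 with ⟨t, -, ht⟩ | ⟨t, -, ht⟩ <;>
    exact dist_nonneg.trans ht

theorem exists_dist_le_gromov (hgeo : GeodesicMetricSpace S) (hhyp : RipsHyperbolic S δ)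
    {f : ℝ → S} {x y : S} (hf : IsGeodesicSeg f x y) (w : S) :
    ∃ t ∈ Set.Icc 0 (dist x y), dist w (f t) ≤ gromov x y w + 2 * δ := by
  obtain ⟨g, hg⟩ := hgeo y w
  obtain ⟨h, hh⟩ := hgeo x w
  -- the internal point of the triangle `x y w` on the side `[x, y]`
  have ht : gromov y w x ∈ Set.Icc 0 (dist x y) :=
    ⟨gromov_nonneg y w x, dist_comm x y ▸ gromov_le_dist_left y w x⟩
  refine ⟨_, ht, ?_⟩
  have hxf := hf.dist_left ht
  have hfy := hf.dist_right ht
  rw [dist_comm w]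
  rcases hhyp x y w f g h hf hg hh _ ht with ⟨u, hu, hclose⟩ | ⟨u, hu, hclose⟩
  · have := hg.dist_right_le_of_dist_le hu hclose
    rw [dist_comm y (f _), hfy] at this
    simp only [gromov] at this ⊢
    linarith [dist_comm x y, dist_comm y w, dist_comm x w]
  · have := hh.dist_right_le_of_dist_le hu hclose
    rw [hxf] at this
    simp only [gromov] at this ⊢
    linarith [dist_comm x y, dist_comm y w, dist_comm x w]

theorem min_gromov_sub_le (hgeo : GeodesicMetricSpace S) (hhyp : RipsHyperbolic S δ)
    (x y z w : S) : min (gromov x y w) (gromov y z w) - 3 * δ ≤ gromov x z w := by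
  obtain ⟨f, hf⟩ := hgeo x z
  obtain ⟨t, ht, hft⟩ := hhyp.exists_dist_le_gromov hgeo hf w
  obtain ⟨g, hg⟩ := hgeo z y
  obtain ⟨h, hh⟩ := hgeo x y
  rcases hhyp x z y f g h hf hg hh t ht with ⟨u, hu, hclose⟩ | ⟨u, hu, hclose⟩
  · have hq := hg.gromov_le_dist hu w
    rw [gromov_comm] at hq
    linarith [dist_triangle w (f t) (g u), min_le_right (gromov x y w) (gromov y z w)]
  · have hq := hh.gromov_le_dist hu w
    linarith [dist_triangle w (f t) (h u), min_le_left (gromov x y w) (gromov y z w)]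

theorem le_gromov_of_chain (hgeo : GeodesicMetricSpace S) (hhyp : RipsHyperbolic S δ)
    {c : ℕ → S} {w : S} {m : ℝ} :
    ∀ n : ℕ, (∀ i ≤ n, m ≤ gromov (c i) (c (i + 1)) w) →
      m - 3 * δ * n ≤ gromov (c 0) (c (n + 1)) w
  | 0, hc => by simpa using hc 0 le_rfl
  | n + 1, hc => by
    have ih := le_gromov_of_chain hgeo hhyp n fun i hi ↦ hc i (hi.trans n.le_succ)
    have hlast := hc (n + 1) le_rfl
    have h4 := hhyp.min_gromov_sub_le hgeo (c 0) (c (n + 1)) (c (n + 2)) w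
    have hδn : 0 ≤ 3 * δ * n := by have := hhyp.nonneg hgeo w; positivity
    push_cast
    linarith [le_min ih (show m - 3 * δ * n ≤ gromov (c (n + 1)) (c (n + 2)) w by linarith)]

theorem dist_le_of_lt_gromov (hgeo : GeodesicMetricSpace S) (hhyp : RipsHyperbolic S δ)
    {f h : ℝ → S} {x a b : S} (hf : IsGeodesicSeg f x a) (hh : IsGeodesicSeg h x b)
    {t : ℝ} (ht₀ : 0 ≤ t) (ht : t < gromov a b x - δ) : dist (f t) (h t) ≤ 2 * δ := by
  obtain ⟨g, hg⟩ := hgeo a b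
  have hta : t ∈ Set.Icc 0 (dist x a) := ⟨ht₀, by
    linarith [dist_comm x a ▸ gromov_le_dist_left a b x, hhyp.nonneg hgeo x]⟩
  have htb : t ∈ Set.Icc 0 (dist x b) := ⟨ht₀, by
    linarith [dist_comm x b ▸ gromov_le_dist_right a b x, hhyp.nonneg hgeo x]⟩
  rcases hhyp x a b f g h hf hg hh t hta with ⟨u, hu, hclose⟩ | ⟨u, hu, hclose⟩
  · have := hg.gromov_le_dist hu x
    linarith [dist_triangle x (f t) (g u), hf.dist_left hta]
  · have hu_t : |u - t| ≤ δ := by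
      rw [← hh.dist_left hu, ← hf.dist_left hta, abs_le]
      constructor <;> linarith [dist_triangle x (f t) (h u), dist_triangle x (h u) (f t),
        dist_comm (f t) (h u)]
    calc dist (f t) (h t) ≤ dist (f t) (h u) + dist (h u) (h t) := dist_triangle _ _ _
      _ ≤ δ + δ := add_le_add hclose (hh.2.2 u hu t htb ▸ hu_t)
      _ = 2 * δ := by ring

end RipsHyperbolic

section Action

variable {G S : Type*} [Group G] [MetricSpace S] [MulAction G S] [IsIsometricSMul G S]

theorem gromov_smul (g : G) (x y t : S) : gromov (g • x) (g • y) (g • t) = gromov x y t := by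
  simp only [gromov, dist_smul]

theorem IsGeodesicSeg.smul {f : ℝ → S} {x y : S} (hf : IsGeodesicSeg f x y) (g : G) :
    IsGeodesicSeg (fun u ↦ g • f u) (g • x) (g • y) := by
  rw [IsGeodesicSeg, dist_smul]
  exact ⟨by rw [hf.1], by rw [hf.2.1], fun s hs t ht ↦ by rw [dist_smul, hf.2.2 s hs t ht]⟩

theorem dist_inv_smul_self (g : G) (x : S) : dist x (g⁻¹ • x) = dist x (g • x) := by
  rw [← dist_smul g, smul_inv_smul, dist_comm]

theorem dist_pow_smul_le (g : G) (s : S) : ∀ n : ℕ, dist s (g ^ n • s) ≤ n * dist s (g • s)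
  | 0 => by simp
  | n + 1 => by
    have := dist_triangle s (g ^ n • s) (g ^ n • g • s)
    rw [dist_smul] at this
    rw [pow_succ, mul_smul]
    push_cast
    linarith [dist_pow_smul_le g s n]

theorem dist_zpow_smul_zpow_smul (g : G) (s : S) (m n : ℤ) :
    dist (g ^ m • s) (g ^ n • s) = dist s (g ^ (n - m).natAbs • s) := by
  rw [← dist_smul (g ^ (-m)), ← mul_smul, ← mul_smul, ← zpow_add, ← zpow_add, neg_add_cancel,
    zpow_zero, one_smul, neg_add_eq_sub]
  obtain ⟨k, hk | hk⟩ := Int.eq_nat_or_neg (n - m)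
  · rw [hk, zpow_natCast, Int.natAbs_natCast]
  · rw [hk, zpow_neg, zpow_natCast, dist_inv_smul_self, Int.natAbs_neg, Int.natAbs_natCast]

theorem loxodromic_of_forall_le_dist_pow_smul {g : G} {s : S} {c : ℝ} (hc : 1 ≤ c)
    (h : ∀ n : ℕ, n * c ≤ dist s (g ^ n • s)) : Loxodromic (S := S) g := by
  have hL : 1 ≤ dist s (g • s) := hc.trans (by simpa using h 1)
  refine ⟨s, dist s (g • s), 0, hL, le_rfl, fun m n ↦ ?_⟩
  have hmn : |(m : ℝ) - n| = (n - m).natAbs := by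
    rw [Nat.cast_natAbs, Int.cast_abs, Int.cast_sub, abs_sub_comm]
  have hk : (0 : ℝ) ≤ (n - m).natAbs := Nat.cast_nonneg _
  rw [dist_zpow_smul_zpow_smul, hmn, sub_zero, add_zero]
  constructor
  · calc (dist s (g • s))⁻¹ * (n - m).natAbs ≤ 1 * (n - m).natAbs := by
          gcongr
          exact inv_le_one_of_one_le₀ hL
      _ ≤ (n - m).natAbs * c := by nlinarith
      _ ≤ _ := h _
  · exact (dist_pow_smul_le g s _).trans_eq (mul_comm _ _)

end Action

section Backtracking

variable {G S : Type*} [Group G] [MetricSpace S] [MulAction G S]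

/-- The negation of the loxodromicity criterion `loxodromic_of_not_backtracks`: geodesics from `x`
to `g • x` and to `g⁻¹ • x` fellow-travel for about half their length. -/
def Backtracks (δ : ℝ) (g : G) (x : S) : Prop :=
  dist x (g • x) < 2 * gromov (g • x) (g⁻¹ • x) x + (6 * δ + 1)

variable [IsIsometricSMul G S] {δ : ℝ}

theorem RipsHyperbolic.dist_pow_smul_add_le (hgeo : GeodesicMetricSpace S)
    (hhyp : RipsHyperbolic S δ) {g : G} {s : S}
    (hc : 0 < dist s (g • s) - 2 * gromov (g • s) (g⁻¹ • s) s - 6 * δ) (n : ℕ) :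
    dist s (g ^ n • s) + (dist s (g • s) - 2 * gromov (g • s) (g⁻¹ • s) s - 6 * δ) ≤
      dist s (g ^ (n + 1) • s) := by
  have hstep : ∀ k : ℕ, dist (g ^ k • s) (g ^ (k + 1) • s) = dist s (g • s) := fun k ↦ by
    rw [pow_succ, mul_smul, dist_smul]
  induction n with
  | zero =>
    simp only [pow_zero, one_smul, dist_self, zero_add, pow_one]
    linarith [hhyp.nonneg hgeo s, gromov_nonneg (g • s) (g⁻¹ • s) s]
  | succ n ih =>
    have hup : g ^ (n + 1) • g • s = g ^ (n + 2) • s := by rw [← mul_smul, ← pow_succ]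
    have hdown : g ^ (n + 1) • g⁻¹ • s = g ^ n • s := by
      rw [← mul_smul, pow_succ, mul_inv_cancel_right]
    have hw : gromov (g ^ (n + 2) • s) (g ^ n • s) (g ^ (n + 1) • s) =
        gromov (g • s) (g⁻¹ • s) s := by
      rw [← hup, ← hdown, gromov_smul]
    have h₁ : gromov (g ^ (n + 2) • s) s (g ^ (n + 1) • s) =
        (dist s (g ^ (n + 1) • s) + dist s (g • s) - dist s (g ^ (n + 2) • s)) / 2 := by
      rw [gromov, dist_comm _ s, dist_comm (g ^ (n + 2) • s), hstep]
      ring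
    have h₂ : gromov s (g ^ n • s) (g ^ (n + 1) • s) =
        (dist s (g ^ (n + 1) • s) + dist s (g • s) - dist s (g ^ n • s)) / 2 := by
      rw [gromov, hstep]
    have h4 := hhyp.min_gromov_sub_le hgeo (g ^ (n + 2) • s) s (g ^ n • s) (g ^ (n + 1) • s)
    rw [hw, h₁, h₂, sub_le_iff_le_add, min_le_iff] at h4
    rcases h4 with h4 | h4 <;> linarith

theorem loxodromic_of_not_backtracks (hgeo : GeodesicMetricSpace S) (hhyp : RipsHyperbolic S δ)
    {g : G} {s : S} (h : ¬Backtracks δ g s) : Loxodromic (S := S) g := by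
  rw [Backtracks, not_lt] at h
  have hc : 0 < dist s (g • s) - 2 * gromov (g • s) (g⁻¹ • s) s - 6 * δ := by linarith
  refine loxodromic_of_forall_le_dist_pow_smul
    (s := s) (c := dist s (g • s) - 2 * gromov (g • s) (g⁻¹ • s) s - 6 * δ) (by linarith)
    fun n ↦ ?_
  induction n with
  | zero => simp
  | succ n ih =>
    push_cast
    linarith [hhyp.dist_pow_smul_add_le hgeo hc n]

end Backtracking

section Coherence

variable {G S : Type*} [Group G] [MetricSpace S] [MulAction G S] [IsIsometricSMul G S] {δ : ℝ}

theorem dist_inv_mul_smul (a b : G) (x : S) :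
    dist x ((a⁻¹ * b) • x) = dist x (a • x) + dist x (b • x) - 2 * gromov (a • x) (b • x) x := by
  rw [← dist_smul a, mul_smul, smul_inv_smul, gromov, dist_comm (a • x) x, dist_comm (b • x) x]
  ring

/-- If `(a • x, b • x)_x` were smaller, the points `a • x, a⁻¹ • x, (a⁻¹ * b) • x, (b⁻¹ * a) • x,
b⁻¹ • x, b • x` would form a chain whose consecutive Gromov products at `x` all exceed it by more
than the `12δ` lost along the chain. -/
theorem min_sub_le_gromov_of_backtracks (hgeo : GeodesicMetricSpace S)
    (hhyp : RipsHyperbolic S δ) {x : S} (hback : ∀ g : G, Backtracks δ g x) (a b : G) :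
    min (dist x (a • x)) (dist x (b • x)) / 2 - (15 * δ + 3 / 2) ≤ gromov (a • x) (b • x) x := by
  by_contra! hp
  set p := gromov (a • x) (b • x) x
  have hδ := hhyp.nonneg hgeo x
  have ha : 2 * p + 30 * δ + 3 < dist x (a • x) := by
    linarith [min_le_left (dist x (a • x)) (dist x (b • x))]
  have hb : 2 * p + 30 * δ + 3 < dist x (b • x) := by
    linarith [min_le_right (dist x (a • x)) (dist x (b • x))]
  have hab := dist_inv_mul_smul a b x
  have hba := dist_inv_mul_smul b a x
  rw [gromov_comm] at hba
  have h₀₁ : p + 12 * δ + 1 ≤ gromov (a • x) (a⁻¹ • x) x := by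
    have := hback a
    rw [Backtracks] at this
    linarith
  have h₁₂ : p + 12 * δ + 1 ≤ gromov (a⁻¹ • x) ((a⁻¹ * b) • x) x := by
    have : dist (a⁻¹ • x) ((a⁻¹ * b) • x) = dist x (b • x) := by
      rw [mul_smul, dist_smul]
    rw [gromov, this, dist_comm _ x, dist_comm _ x, dist_inv_smul_self, hab]
    linarith
  have h₂₃ : p + 12 * δ + 1 ≤ gromov ((a⁻¹ * b) • x) ((b⁻¹ * a) • x) x := by
    have := hback (a⁻¹ * b)
    rw [Backtracks, mul_inv_rev, inv_inv, hab] at this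
    linarith
  have h₃₄ : p + 12 * δ + 1 ≤ gromov ((b⁻¹ * a) • x) (b⁻¹ • x) x := by
    have : dist ((b⁻¹ * a) • x) (b⁻¹ • x) = dist x (a • x) := by
      rw [mul_smul, dist_smul, dist_comm]
    rw [gromov, this, dist_comm _ x, dist_comm _ x, dist_inv_smul_self, hba]
    linarith
  have h₄₅ : p + 12 * δ + 1 ≤ gromov (b⁻¹ • x) (b • x) x := by
    have := hback b
    rw [Backtracks, gromov_comm] at this
    linarith
  let c : ℕ → S
    | 0 => a • x
    | 1 => a⁻¹ • x
    | 2 => (a⁻¹ * b) • x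
    | 3 => (b⁻¹ * a) • x
    | 4 => b⁻¹ • x
    | _ => b • x
  have := hhyp.le_gromov_of_chain hgeo (c := c) (w := x) 4 fun i hi ↦ by
    interval_cases i <;> assumption
  change p + 12 * δ + 1 - 3 * δ * (4 : ℕ) ≤ p at this
  norm_num at this
  linarith

end Coherence

section Displacement

variable {G S : Type*} [Group G] [MetricSpace S] [MulAction G S] [IsIsometricSMul G S] {δ : ℝ}
  {s : S}

theorem dist_smul_smul_le_of_backtracks (hgeo : GeodesicMetricSpace S)
    (hhyp : RipsHyperbolic S δ) (hback : ∀ g : G, Backtracks δ g s) {g u : G}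
    (h : dist s (g • s) ≤ dist s (u • s)) :
    dist s (g • u • s) ≤ dist s (u • s) + (30 * δ + 3) := by
  have hp := min_sub_le_gromov_of_backtracks hgeo hhyp hback g⁻¹ u
  have hd := dist_inv_mul_smul g⁻¹ u s
  rw [inv_inv, mul_smul] at hd
  rw [dist_inv_smul_self, min_eq_left h] at hp
  rw [dist_inv_smul_self] at hd
  linarith

theorem abs_dist_smul_smul_sub_le_of_backtracks (hgeo : GeodesicMetricSpace S)
    (hhyp : RipsHyperbolic S δ) (hback : ∀ g : G, Backtracks δ g s) {g v : G}
    (h : 2 * dist s (g • s) ≤ dist s (v • s)) :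
    |dist s (g • v • s) - dist s (v • s)| ≤ 30 * δ + 3 := by
  have hg := dist_nonneg (x := s) (y := g • s)
  have htri := dist_triangle (g • s) s (g • v • s)
  rw [dist_smul, dist_comm (g • s)] at htri
  have hinv := dist_smul_smul_le_of_backtracks hgeo hhyp hback (g := g⁻¹) (u := g * v)
    (by rw [dist_inv_smul_self, mul_smul]; linarith)
  rw [mul_smul, inv_smul_smul] at hinv
  rw [abs_le]
  constructor <;>
  linarith [dist_smul_smul_le_of_backtracks hgeo hhyp hback (g := g) (u := v) (by linarith)]

/-- Along the middle part, `[s, v • s]`, `[s, g • v • s]` and `g • [s, v • s]` fellow-travel, and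
`g • v • s` is about as far from `s` as `v • s`. -/
theorem dist_smul_le_of_backtracks (hgeo : GeodesicMetricSpace S) (hhyp : RipsHyperbolic S δ)
    (hback : ∀ g : G, Backtracks δ g s) {g v : G} {ρ : ℝ → S} (hρ : IsGeodesicSeg ρ s (v • s))
    (h : 2 * dist s (g • s) ≤ dist s (v • s)) {t : ℝ}
    (ht₁ : dist s (g • s) / 2 + 31 * δ + 4 ≤ t) (ht₂ : t < dist s (v • s) / 2 - 31 * δ - 3) :
    dist (ρ t) (g • ρ t) ≤ 34 * δ + 3 := by
  have hδ := hhyp.nonneg hgeo s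
  have hg := dist_nonneg (x := s) (y := g • s)
  have hbus := abs_dist_smul_smul_sub_le_of_backtracks hgeo hhyp hback h
  rw [abs_le] at hbus
  obtain ⟨ρ', hρ'⟩ := hgeo s (g • v • s)
  have hρ'ρ : dist (ρ t) (ρ' t) ≤ 2 * δ := by
    refine hhyp.dist_le_of_lt_gromov hgeo hρ hρ' (by linarith) ?_
    have := min_sub_le_gromov_of_backtracks hgeo hhyp hback v (g * v)
    rw [mul_smul] at this
    rcases min_cases (dist s (v • s)) (dist s (g • v • s)) with ⟨hmin, -⟩ | ⟨hmin, -⟩ <;>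
      linarith
  have hgρρ' : dist (g • ρ t) (ρ' (dist s (g • v • s) - dist s (v • s) + t)) ≤ 2 * δ := by
    have hgρ := (hρ.smul g).reverse
    rw [dist_smul] at hgρ
    have := hhyp.dist_le_of_lt_gromov hgeo hgρ hρ'.reverse (t := dist s (v • s) - t)
      (by linarith) (by
        rw [gromov, dist_smul, dist_comm (g • s) s]
        linarith)
    rwa [sub_sub_cancel, ← sub_add] at this
  have hρ't : dist (ρ' (dist s (g • v • s) - dist s (v • s) + t)) (ρ' t) ≤ 30 * δ + 3 := by
    rw [hρ'.2.2 _ ⟨by linarith, by linarith⟩ _ ⟨by linarith, by linarith⟩, add_sub_cancel_right,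
      abs_le]
    constructor <;> linarith
  calc dist (ρ t) (g • ρ t)
      ≤ dist (ρ t) (ρ' t) + dist (ρ' t) (ρ' (dist s (g • v • s) - dist s (v • s) + t)) +
          dist (ρ' (dist s (g • v • s) - dist s (v • s) + t)) (g • ρ t) :=
        dist_triangle4 _ _ _ _
    _ ≤ 2 * δ + (30 * δ + 3) + 2 * δ := by
      rw [dist_comm (ρ' t), dist_comm _ (g • ρ t)]
      gcongr
    _ = 34 * δ + 3 := by ring

theorem exists_dist_eq_and_displacement_le_of_backtracks (hgeo : GeodesicMetricSpace S)
    (hhyp : RipsHyperbolic S δ) (hback : ∀ g : G, Backtracks δ g s)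
    (hs : ¬IsBounded (MulAction.orbit G s)) (T : Finset G) {R : ℝ} (hR : 0 ≤ R) :
    ∃ x y : S, dist x y = R ∧
      (T : Set G) ⊆ {g | dist x (g • x) ≤ 34 * δ + 3 ∧ dist y (g • y) ≤ 34 * δ + 3} := by
  have hδ := hhyp.nonneg hgeo s
  set l := ∑ g ∈ T, dist s (g • s)
  have hl : ∀ g ∈ T, dist s (g • s) ≤ l := fun g hg ↦
    Finset.single_le_sum (f := fun g ↦ dist s (g • s)) (fun _ _ ↦ dist_nonneg) hg
  have hl₀ : 0 ≤ l := Finset.sum_nonneg fun _ _ ↦ dist_nonneg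
  set t := l / 2 + 31 * δ + 4 with ht
  obtain ⟨v, hv⟩ : ∃ v : G, 2 * (t + R) + 62 * δ + 6 + 2 * l < dist s (v • s) := by
    by_contra! hv
    refine hs ((Metric.isBounded_iff_subset_closedBall s).2 ⟨2 * (t + R) + 62 * δ + 6 + 2 * l, ?_⟩)
    rintro _ ⟨v, rfl⟩
    exact (dist_comm _ s).trans_le (hv v)
  obtain ⟨ρ, hρ⟩ := hgeo s (v • s)
  have ht₀ : 0 ≤ t := by positivity
  have hmem : ∀ u ∈ Set.Icc t (t + R), u ∈ Set.Icc 0 (dist s (v • s)) := fun u hu ↦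
    ⟨by linarith [hu.1], by linarith [hu.2]⟩
  refine ⟨ρ t, ρ (t + R), ?_, fun g hg ↦ ⟨?_, ?_⟩⟩
  · rw [hρ.2.2 _ (hmem _ ⟨le_rfl, by linarith⟩) _ (hmem _ ⟨by linarith, le_rfl⟩),
      sub_add_cancel_left, abs_neg, abs_of_nonneg hR]
  all_goals
    refine dist_smul_le_of_backtracks hgeo hhyp hback hρ (by linarith [hl g hg]) ?_ ?_ <;>
      linarith [hl g hg]

end Displacement

theorem stmt_7_general {G S : Type*} [Group G] [MetricSpace S] [MulAction G S]
    [IsIsometricSMul G S] (δ : ℝ)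
    (hgeo : GeodesicMetricSpace S) (hhyp : RipsHyperbolic S δ)
    (hacyl : AcylindricalAction G S)
    (hunb : ∃ s : S, ¬ Bornology.IsBounded (MulAction.orbit G s)) :
    ∃ g : G, Loxodromic (S := S) g := by
  by_contra! hno
  obtain ⟨s, hs⟩ := hunb
  have hback (g : G) : Backtracks δ g s := by
    by_contra h
    exact hno g (loxodromic_of_not_backtracks hgeo hhyp h)
  have : Infinite G := by
    rw [← not_finite_iff_infinite]
    exact fun _ ↦ hs (Set.finite_range fun g : G ↦ g • s).isBounded
  obtain ⟨R, N, hR, hacylRN⟩ := hacyl (34 * δ + 3) (by linarith [hhyp.nonneg hgeo s])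
  obtain ⟨T, hT⟩ := Infinite.exists_subset_card_eq G (N + 1)
  obtain ⟨x, y, hxy, hTxy⟩ :=
    exists_dist_eq_and_displacement_le_of_backtracks hgeo hhyp hback hs T hR.le
  obtain ⟨hfin, hcard⟩ := hacylRN x y hxy.ge
  have := Set.ncard_le_ncard hTxy hfin
  rw [Set.ncard_coe_finset, hT] at this
  omega

theorem stmt_7 {G S : Type*} [Group G] [MetricSpace S] [MulAction G S]
    [IsIsometricSMul G S] (δ : ℝ) (hδ : 0 ≤ δ)
    (hgeo : GeodesicMetricSpace S) (hhyp : RipsHyperbolic S δ)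
    (hacyl : AcylindricalAction G S)
    (hunb : ∃ s : S, ¬ Bornology.IsBounded (MulAction.orbit G s)) :
    ∃ g : G, Loxodromic (S := S) g :=
  stmt_7_general δ hgeo hhyp hacyl hunb
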